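/- arXiv:math/0412097 — 6 statements merged into one kernel-verified Lean document; each statement's English description precedes it below -/
import Mathlib

section
/- Let ω be a 2-form on a smooth manifold M and a : TM → TM a (1,1)-tensor commuting with ω (i.e. ω(aX,Y) = ω(X,aY) for all vector fields X, Y). Then for all vector fields X, Y: i_{N_a(X,Y)}(ω) = i_{aX∧Y + X∧aY}(dω_a) − i_{aX∧aY}(dω) − i_{X∧Y}(d(a*ω)), where N_a(X,Y) = [aX,aY] + a²[X,Y] − a([aX,Y] + [X,aY]) is the Nijenhuis torsion, ω_a(X,Y) = ω(aX,Y), (a*ω)(X,Y) = ω(aX,aY), and i_{X∧Y}(θ) denotes the 1-form Z ↦ θ(X,Y,Z). -/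
noncomputable section

open Derivation

variable (A : Type*) [CommRing A] [Algebra ℝ A]

/-- Vector fields on the "manifold" with function algebra `A`. -/
abbrev VecF := Derivation ℝ A A

/-- One-forms: `A`-linear functionals on vector fields. -/
abbrev OneForm := VecF A →ₗ[A] A

variable {A}

/-- The differential of a function, as a one-form. -/
def dFun (f : A) : OneForm A where
  toFun X := X f
  map_add' X Y := rfl
  map_smul' a X := rfl

/-- The Lie derivative of a one-form along a vector field (as a one-form). -/
def lieOneForm (X : VecF A) (ξ : OneForm A) : OneForm A where
  toFun Y := X (ξ Y) - ξ ⁅X, Y⁆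
  map_add' Y Z := by simp [map_add]; ring
  map_smul' f Y := by
    have hb : ⁅X, f • Y⁆ = f • ⁅X, Y⁆ + (X f) • Y := by
      ext g
      simp [Derivation.commutator_apply, Derivation.leibniz, smul_eq_mul]
    simp [hb, Derivation.leibniz, smul_eq_mul]
    ring

/-- The exterior derivative of a 2-form (given as a bilinear expression on
vector fields), defined by the Koszul-type formula. -/
def dTwo (σ : VecF A → VecF A → A) : VecF A → VecF A → VecF A → A :=
  fun X Y Z =>
    X (σ Y Z) - Y (σ X Z) + Z (σ X Y)
      - σ ⁅X, Y⁆ Z + σ ⁅X, Z⁆ Y - σ ⁅Y, Z⁆ X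

/-- The Nijenhuis torsion of a `(1,1)`-tensor. -/
def nijenhuis (a : VecF A →ₗ[A] VecF A) (X Y : VecF A) : VecF A :=
  ⁅a X, a Y⁆ + a (a ⁅X, Y⁆) - a ⁅a X, Y⁆ - a ⁅X, a Y⁆

/-- The canonical pairing on `TM ⊕ T*M`. -/
def cPair (α β : VecF A × OneForm A) : A := α.2 β.1 + β.2 α.1

/-- The Courant bracket on sections of `TM ⊕ T*M`. -/
def courant (α β : VecF A × OneForm A) : VecF A × OneForm A :=
  (⁅α.1, β.1⁆,
    lieOneForm α.1 β.2 - lieOneForm β.1 α.2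
      - algebraMap ℝ A (1/2) • dFun (β.2 α.1 - α.2 β.1))

theorem nijenhuis_contraction_formula_general
    (ω : VecF A →ₗ[A] VecF A →ₗ[A] A)
    (a : VecF A →ₗ[A] VecF A) (hcomm : ∀ X Y, ω (a X) Y = ω X (a Y))
    (X Y Z : VecF A) :
    ω (nijenhuis a X Y) Z
      = (dTwo (fun U V => ω (a U) V) (a X) Y Z
          + dTwo (fun U V => ω (a U) V) X (a Y) Z)
        - dTwo (fun U V => ω U V) (a X) (a Y) Z
        - dTwo (fun U V => ω (a U) (a V)) X Y Z := by
  -- Once `hcomm` moves every `a` onto the second slot of `ω`, the derivative terms of the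
  -- three `dTwo`s cancel in pairs and their bracket terms add up to `ω (N_a(X, Y)) Z`.
  simp only [nijenhuis, dTwo, map_add, map_sub, LinearMap.add_apply, LinearMap.sub_apply, hcomm]
  ring

/-- for a 2-form `ω` and a `(1,1)`-tensor `a` commuting with `ω`,
`i_{N_a(X,Y)}ω = i_{aX∧Y + X∧aY}(dω_a) − i_{aX∧aY}(dω) − i_{X∧Y}(d(a*ω))`. -/
theorem nijenhuis_contraction_formula
    (ω : VecF A →ₗ[A] VecF A →ₗ[A] A) (hskew : ∀ X Y, ω X Y = - ω Y X)
    (a : VecF A →ₗ[A] VecF A) (hcomm : ∀ X Y, ω (a X) Y = ω X (a Y))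
    (X Y Z : VecF A) :
    ω (nijenhuis a X Y) Z
      = (dTwo (fun U V => ω (a U) V) (a X) Y Z
          + dTwo (fun U V => ω (a U) V) X (a Y) Z)
        - dTwo (fun U V => ω U V) (a X) (a Y) Z
        - dTwo (fun U V => ω (a U) (a V)) X Y Z :=
  nijenhuis_contraction_formula_general ω a hcomm X Y Z
end
end

section
/- Let (M, ω) be a symplectic manifold and a : TM → TM a (1,1)-tensor commuting with ω such that the 2-form ω_a(X,Y) = ω(aX,Y) is closed (a Hitchin pair). Then the twist σ := −(ω + a*ω) satisfies, for all vector fields X, Y: i_{X∧Y}(dσ) = i_{N_a(X,Y)}(ω); consequently N_a(X,Y) = ω♯⁻¹ i_{X∧Y}(dσ), i.e. N_a(X,Y) = π♯ i_{X∧Y}(dσ) where π is the Poisson bivector inverse to ω. -/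
noncomputable section

open Derivation

variable (A : Type*) [CommRing A] [Algebra ℝ A]

variable {A}

/-- The twist of a pair `(ω, a)`: the 2-form `σ = −(ω + a*ω)`. -/
def twist (ω : VecF A →ₗ[A] VecF A →ₗ[A] A) (a : VecF A →ₗ[A] VecF A) :
    VecF A → VecF A → A :=
  fun U V => -(ω U V + ω (a U) (a V))

/-! Since `ω(aU, aV) = ω(a²U, V)`, the twist is `σ = −(ω + ω_{a²})`. For any `ω` commuting with
`a`, the combination `dω(aX, aY, Z) − dω_a(aX, Y, Z) − dω_a(X, aY, Z) + dω_{a²}(X, Y, Z)` equals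
`−ω(N_a(X, Y), Z)`: its derivative terms cancel outright, and the bracket terms that do not
assemble into `N_a` cancel in pairs after moving `a` across `ω`. As `dω = dω_a = 0`, this leaves
`dσ(X, Y, Z) = −dω_{a²}(X, Y, Z) = ω(N_a(X, Y), Z)`; applying `π♯` gives the second claim. -/

section

theorem dTwo_add (σ τ : VecF A → VecF A → A) : dTwo (σ + τ) = dTwo σ + dTwo τ := by
  funext X Y Z
  simp only [dTwo, Pi.add_apply, map_add]
  ring

theorem dTwo_neg (σ : VecF A → VecF A → A) : dTwo (-σ) = -dTwo σ := by
  funext X Y Z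
  simp only [dTwo, Pi.neg_apply, map_neg]
  ring

variable {ω : VecF A →ₗ[A] VecF A →ₗ[A] A} {a : VecF A →ₗ[A] VecF A}

theorem dTwo_twist (hcomm : ∀ X Y, ω (a X) Y = ω X (a Y)) (X Y Z : VecF A) :
    dTwo (twist ω a) X Y Z =
      -(dTwo (fun U V => ω U V) X Y Z + dTwo (fun U V => ω (a (a U)) V) X Y Z) := by
  have h : twist ω a = -((fun U V => ω U V) + fun U V => ω (a (a U)) V) := by
    funext U V
    simp only [twist, hcomm (a U), Pi.neg_apply, Pi.add_apply]
  rw [h, dTwo_neg, dTwo_add]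
  rfl

theorem dTwo_combination_eq_neg_nijenhuis (hcomm : ∀ X Y, ω (a X) Y = ω X (a Y))
    (X Y Z : VecF A) :
    dTwo (fun U V => ω U V) (a X) (a Y) Z - dTwo (fun U V => ω (a U) V) (a X) Y Z
      - dTwo (fun U V => ω (a U) V) X (a Y) Z + dTwo (fun U V => ω (a (a U)) V) X Y Z
      = -ω (nijenhuis a X Y) Z := by
  simp only [dTwo, nijenhuis, map_add, map_sub, LinearMap.add_apply, LinearMap.sub_apply]
  linear_combination -hcomm ⁅a X, Z⁆ Y + hcomm ⁅a Y, Z⁆ X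
    - hcomm (a ⁅Y, Z⁆) X + hcomm (a ⁅X, Z⁆) Y

end

theorem twist_dTwo_eq_nijenhuis_general
    (ω : VecF A →ₗ[A] VecF A →ₗ[A] A)
    (hclosed : ∀ X Y Z, dTwo (fun U V => ω U V) X Y Z = 0)
    (a : VecF A →ₗ[A] VecF A) (hcomm : ∀ X Y, ω (a X) Y = ω X (a Y))
    (hcloseda : ∀ X Y Z, dTwo (fun U V => ω (a U) V) X Y Z = 0)
    (p : (VecF A → A) → VecF A) (hp : ∀ X : VecF A, p (fun Y => ω X Y) = X) :
    (∀ X Y Z, dTwo (twist ω a) X Y Z = ω (nijenhuis a X Y) Z)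
      ∧ ∀ X Y, nijenhuis a X Y = p (fun Z => dTwo (twist ω a) X Y Z) := by
  have dTwo_twist_eq : ∀ X Y Z, dTwo (twist ω a) X Y Z = ω (nijenhuis a X Y) Z := fun X Y Z => by
    rw [dTwo_twist hcomm]
    linear_combination -hclosed X Y Z + hclosed (a X) (a Y) Z - hcloseda (a X) Y Z
      - hcloseda X (a Y) Z - dTwo_combination_eq_neg_nijenhuis hcomm X Y Z
  refine ⟨dTwo_twist_eq, fun X Y => ?_⟩
  simp only [dTwo_twist_eq, hp]

/-- for a Hitchin pair `(ω, a)` with twist `σ = −(ω + a*ω)`,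
`i_{X∧Y}(dσ) = i_{N_a(X,Y)}ω`, and hence `N_a(X,Y) = π♯ i_{X∧Y}(dσ)` where
`π♯` is the inverse of `ω♯`. -/
theorem twist_dTwo_eq_nijenhuis
    (ω : VecF A →ₗ[A] VecF A →ₗ[A] A) (hskew : ∀ X Y, ω X Y = - ω Y X)
    (hclosed : ∀ X Y Z, dTwo (fun U V => ω U V) X Y Z = 0)
    (a : VecF A →ₗ[A] VecF A) (hcomm : ∀ X Y, ω (a X) Y = ω X (a Y))
    (hcloseda : ∀ X Y Z, dTwo (fun U V => ω (a U) V) X Y Z = 0)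
    (p : (VecF A → A) → VecF A) (hp : ∀ X : VecF A, p (fun Y => ω X Y) = X) :
    (∀ X Y Z, dTwo (twist ω a) X Y Z = ω (nijenhuis a X Y) Z)
      ∧ ∀ X Y, nijenhuis a X Y = p (fun Z => dTwo (twist ω a) X Y Z) :=
  twist_dTwo_eq_nijenhuis_general ω hclosed a hcomm hcloseda p hp
end
end

section
/- Let (M, ω) be a symplectic manifold and a an almost complex structure on M (a² = −Id) commuting with ω. Then the Nijenhuis torsion N_a vanishes if and only if the 2-form ω_a(X,Y) = ω(aX,Y) is closed. -/
noncomputable section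

open Derivation

variable (A : Type*) [CommRing A] [Algebra ℝ A]

variable {A}

/-! Expanding `dω` at `(X, aY, Z)`, `(aX, Y, Z)`, `(X, Y, aZ)` and `(aX, aY, aZ)` with `a² = -1`
and `ω(aU, V) = ω(U, aV)`, the sum is `2 dω_a(X, Y, Z)` minus the cyclic sum
`ω(a N_a(X, Y), Z) - ω(a N_a(X, Z), Y) + ω(a N_a(Y, Z), X)`. As `ω` is closed, `N_a = 0` makes `ω_a`
closed. Conversely, `N_a(aX, aY) = -N_a(X, Y)` while `a N_a(aX, Z) = N_a(X, Z)`, so comparing the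
identity at `(X, Y, Z)` and `(aX, aY, Z)` isolates `ω(a N_a(X, Y), Z)`; nondegeneracy then gives
`a N_a = 0`, hence `N_a = 0`. -/

lemma eq_zero_of_two_mul_eq_zero {R : Type*} [Ring R] [Algebra ℝ R] {t : R} (h : 2 * t = 0) :
    t = 0 := by
  have h' : (2 : ℝ) • t = 0 := by rwa [Algebra.smul_def, map_ofNat]
  exact (smul_eq_zero.mp h').resolve_left two_ne_zero

section Nijenhuis

variable {a : VecF A →ₗ[A] VecF A}

lemma nijenhuis_map_left (ha2 : ∀ X, a (a X) = -X) (X Y : VecF A) :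
    nijenhuis a (a X) Y = -a (nijenhuis a X Y) := by
  simp only [nijenhuis, map_add, map_sub, ha2, neg_lie, map_neg]
  abel

lemma nijenhuis_map_right (ha2 : ∀ X, a (a X) = -X) (X Y : VecF A) :
    nijenhuis a X (a Y) = -a (nijenhuis a X Y) := by
  simp only [nijenhuis, map_add, map_sub, ha2, lie_neg, map_neg]
  abel

lemma nijenhuis_map_map (ha2 : ∀ X, a (a X) = -X) (X Y : VecF A) :
    nijenhuis a (a X) (a Y) = -nijenhuis a X Y := by
  rw [nijenhuis_map_left ha2, nijenhuis_map_right ha2, map_neg, ha2, neg_neg]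

end Nijenhuis

section Closed

variable (ω : VecF A →ₗ[A] VecF A →ₗ[A] A) {a : VecF A →ₗ[A] VecF A}

lemma two_mul_dTwo_comp_sub_nijenhuis (ha2 : ∀ X, a (a X) = -X)
    (hcomm : ∀ X Y, ω (a X) Y = ω X (a Y)) (X Y Z : VecF A) :
    2 * dTwo (fun U V => ω (a U) V) X Y Z
        - (ω (a (nijenhuis a X Y)) Z - ω (a (nijenhuis a X Z)) Y + ω (a (nijenhuis a Y Z)) X)
      = dTwo (fun U V => ω U V) X (a Y) Z + dTwo (fun U V => ω U V) (a X) Y Z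
        + dTwo (fun U V => ω U V) X Y (a Z) + dTwo (fun U V => ω U V) (a X) (a Y) (a Z) := by
  simp only [dTwo, nijenhuis, map_add, map_sub, map_neg, ha2, ← hcomm,
    LinearMap.add_apply, LinearMap.sub_apply, LinearMap.neg_apply]
  ring

lemma two_mul_dTwo_comp_eq_nijenhuis (hclosed : ∀ X Y Z, dTwo (fun U V => ω U V) X Y Z = 0)
    (ha2 : ∀ X, a (a X) = -X) (hcomm : ∀ X Y, ω (a X) Y = ω X (a Y)) (X Y Z : VecF A) :
    2 * dTwo (fun U V => ω (a U) V) X Y Z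
      = ω (a (nijenhuis a X Y)) Z - ω (a (nijenhuis a X Z)) Y + ω (a (nijenhuis a Y Z)) X := by
  have h := two_mul_dTwo_comp_sub_nijenhuis ω ha2 hcomm X Y Z
  simp only [hclosed, add_zero] at h
  exact sub_eq_zero.mp h

lemma apply_map_nijenhuis_eq_zero_of_dTwo_comp_eq_zero
    (hclosed : ∀ X Y Z, dTwo (fun U V => ω U V) X Y Z = 0)
    (ha2 : ∀ X, a (a X) = -X) (hcomm : ∀ X Y, ω (a X) Y = ω X (a Y))
    (hd : ∀ X Y Z, dTwo (fun U V => ω (a U) V) X Y Z = 0) (X Y Z : VecF A) :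
    ω (a (nijenhuis a X Y)) Z = 0 := by
  have k := two_mul_dTwo_comp_eq_nijenhuis ω hclosed ha2 hcomm X Y Z
  have k' := two_mul_dTwo_comp_eq_nijenhuis ω hclosed ha2 hcomm (a X) (a Y) Z
  rw [hd] at k k'
  simp only [nijenhuis_map_map ha2, nijenhuis_map_left ha2, map_neg, ha2, neg_neg,
    LinearMap.neg_apply, ← hcomm] at k'
  apply eq_zero_of_two_mul_eq_zero
  linear_combination k' - k

end Closed

theorem nijenhuis_vanishes_iff_closed_general
    (ω : VecF A →ₗ[A] VecF A →ₗ[A] A)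
    (hclosed : ∀ X Y Z, dTwo (fun U V => ω U V) X Y Z = 0)
    (hnd : ∀ X : VecF A, (∀ Y, ω X Y = 0) → X = 0)
    (a : VecF A →ₗ[A] VecF A) (ha2 : ∀ X, a (a X) = -X)
    (hcomm : ∀ X Y, ω (a X) Y = ω X (a Y)) :
    (∀ X Y, nijenhuis a X Y = 0)
      ↔ ∀ X Y Z, dTwo (fun U V => ω (a U) V) X Y Z = 0 := by
  constructor
  · intro hN X Y Z
    apply eq_zero_of_two_mul_eq_zero
    simp [two_mul_dTwo_comp_eq_nijenhuis ω hclosed ha2 hcomm, hN]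
  · intro hd X Y
    have haN : a (nijenhuis a X Y) = 0 :=
      hnd _ (apply_map_nijenhuis_eq_zero_of_dTwo_comp_eq_zero ω hclosed ha2 hcomm hd X Y)
    simpa [haN] using ha2 (nijenhuis a X Y)

/-- for a symplectic form `ω` and an almost complex structure `a`
commuting with `ω`, the torsion `N_a` vanishes iff `ω_a` is closed. -/
theorem nijenhuis_vanishes_iff_closed
    (ω : VecF A →ₗ[A] VecF A →ₗ[A] A) (hskew : ∀ X Y, ω X Y = - ω Y X)
    (hclosed : ∀ X Y Z, dTwo (fun U V => ω U V) X Y Z = 0)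
    (hnd : ∀ X : VecF A, (∀ Y, ω X Y = 0) → X = 0)
    (a : VecF A →ₗ[A] VecF A) (ha2 : ∀ X, a (a X) = -X)
    (hcomm : ∀ X Y, ω (a X) Y = ω X (a Y)) :
    (∀ X Y, nijenhuis a X Y = 0)
      ↔ ∀ X Y Z, dTwo (fun U V => ω (a U) V) X Y Z = 0 :=
  nijenhuis_vanishes_iff_closed_general ω hclosed hnd a ha2 hcomm
end
end

section
/- Let J be an integrable almost complex structure on M (J² = −Id and N_J = 0). Then for any 2-form ω on M commuting with J (i.e. ω(JX,Y) = ω(X,JY)) and all vector fields X, Y, Z: 2·dω_J(X,Y,Z) = dω(JX,Y,Z) + dω(X,JY,Z) + dω(X,Y,JZ) + dω(JX,JY,JZ), where ω_J(X,Y) = ω(JX,Y). -/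
noncomputable section

open Derivation

variable (A : Type*) [CommRing A] [Algebra ℝ A]

variable {A}

/-
Expand both sides with the Koszul formula. Since `ω` commutes with `J`, `ω (J U) (J V) = -ω U V`,
so the derivative terms `JX (ω Y Z)` and `JX (ω (JY) (JZ))` cancel and the others add up to twice
those of `dω_J`. The brackets `⁅JU, JV⁆` produced by `dω (JX, JY, JZ)` are removed by integrability,
in the form `⁅JU, JV⁆ = J⁅JU, V⁆ + J⁅U, JV⁆ + ⁅U, V⁆`; what remains is a ring identity.
-/

theorem lie_apply_apply_eq_of_nijenhuis_eq_zero {a : VecF A →ₗ[A] VecF A}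
    (ha : ∀ X, a (a X) = -X) {X Y : VecF A} (h : nijenhuis a X Y = 0) :
    ⁅a X, a Y⁆ = a ⁅a X, Y⁆ + a ⁅X, a Y⁆ + ⁅X, Y⁆ := by
  rw [nijenhuis, ha] at h
  rw [← sub_eq_zero, ← h]
  abel

theorem two_dTwo_omegaJ_general
    (J : VecF A →ₗ[A] VecF A) (hJ2 : ∀ X, J (J X) = -X)
    (hNJ : ∀ X Y, nijenhuis J X Y = 0)
    (ω : VecF A →ₗ[A] VecF A →ₗ[A] A)
    (hcomm : ∀ X Y, ω (J X) Y = ω X (J Y)) :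
    ∀ X Y Z : VecF A,
      2 * dTwo (fun U V => ω (J U) V) X Y Z
        = dTwo (fun U V => ω U V) (J X) Y Z
          + dTwo (fun U V => ω U V) X (J Y) Z
          + dTwo (fun U V => ω U V) X Y (J Z)
          + dTwo (fun U V => ω U V) (J X) (J Y) (J Z) := by
  intro X Y Z
  have hbracket U V := lie_apply_apply_eq_of_nijenhuis_eq_zero hJ2 (hNJ U V)
  have hcomm' U V : ω U (J V) = ω (J U) V := (hcomm U V).symm
  simp only [dTwo, hbracket, hcomm', hJ2, map_add, map_neg, LinearMap.add_apply,
    LinearMap.neg_apply]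
  ring

/-- for an integrable complex structure `J` and a 2-form `ω`
commuting with `J`:
`2 dω_J(X,Y,Z) = dω(JX,Y,Z) + dω(X,JY,Z) + dω(X,Y,JZ) + dω(JX,JY,JZ)`. -/
theorem two_dTwo_omegaJ
    (J : VecF A →ₗ[A] VecF A) (hJ2 : ∀ X, J (J X) = -X)
    (hNJ : ∀ X Y, nijenhuis J X Y = 0)
    (ω : VecF A →ₗ[A] VecF A →ₗ[A] A) (hskew : ∀ X Y, ω X Y = - ω Y X)
    (hcomm : ∀ X Y, ω (J X) Y = ω X (J Y)) :
    ∀ X Y Z : VecF A,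
      2 * dTwo (fun U V => ω (J U) V) X Y Z
        = dTwo (fun U V => ω U V) (J X) Y Z
          + dTwo (fun U V => ω U V) X (J Y) Z
          + dTwo (fun U V => ω U V) X Y (J Z)
          + dTwo (fun U V => ω U V) (J X) (J Y) (J Z) :=
  two_dTwo_omegaJ_general J hJ2 hNJ ω hcomm
end
end

section
/- Let ω be a symplectic form on M with associated nondegenerate bivector π (π♯ = (ω♯)⁻¹), and let a : TM → TM be a bundle map. Then the pair of conditions (a∘π♯ = π♯∘a* and a*([ξ,η]_π) = L_{π♯ξ}(a*η) − L_{π♯η}(a*ξ) − d(π(a*ξ, η)) for all 1-forms ξ, η) holds if and only if (ω and a commute, i.e. ω(aX,Y)=ω(X,aY), and the 2-form ω_a(X,Y) = ω(aX,Y) is closed). -/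
noncomputable section

open Derivation

variable (A : Type*) [CommRing A] [Algebra ℝ A]

variable {A}

/-! Since `p = π♯` inverts `ω♯`, every one-form is `ω♯ X`. Then `a ∘ π♯ = π♯ ∘ a*` says
`ω♯ (a X) = a* (ω♯ X)`, i.e. `ω (a X) Y = ω X (a Y)`. Granting this, the defect of the second
condition at `ξ = ω♯ X`, `η = ω♯ Y` is `dω (X, Y, a Z) - dω_a (X, Y, Z)`, and `dω = 0`. -/

section
variable {A : Type*} [CommRing A] [Algebra ℝ A]
  {ω : VecF A →ₗ[A] VecF A →ₗ[A] A} {p : OneForm A →ₗ[A] VecF A} {a : VecF A →ₗ[A] VecF A}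

theorem sharp_comp_eq_iff_compatible (hp1 : ∀ X : VecF A, p (ω X) = X)
    (hp2 : ∀ ξ : OneForm A, ω (p ξ) = ξ) :
    (∀ ξ : OneForm A, a (p ξ) = p (ξ ∘ₗ a)) ↔ ∀ X Y, ω (a X) Y = ω X (a Y) := by
  constructor
  · intro h X Y
    rw [← hp1 X, h, hp2, hp1]
    rfl
  · intro hc ξ
    have hcomp : ω (a (p ξ)) = ξ ∘ₗ a := by
      ext Y
      rw [hc, hp2]
      rfl
    rw [← hcomp, hp1]

theorem c2_defect_eq_dTwo_sub_dTwo (hskew : ∀ X Y, ω X Y = - ω Y X)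
    (hp1 : ∀ X : VecF A, p (ω X) = X) (hc : ∀ X Y, ω (a X) Y = ω X (a Y)) (X Y Z : VecF A) :
    lieOneForm (p (ω X)) (ω Y) (a Z) - lieOneForm (p (ω Y)) (ω X) (a Z)
        - dFun (ω Y (p (ω X))) (a Z)
      - (lieOneForm (p (ω X)) (ω Y ∘ₗ a) Z - lieOneForm (p (ω Y)) (ω X ∘ₗ a) Z
          - dFun (ω Y (p (ω X ∘ₗ a))) Z)
      = dTwo (fun U V => ω U V) X Y (a Z) - dTwo (fun U V => ω (a U) V) X Y Z := by
  have hcomp : ∀ U, ω U ∘ₗ a = ω (a U) := fun U => LinearMap.ext fun V => (hc U V).symm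
  simp only [hcomp, hp1, lieOneForm, dFun, dTwo, LinearMap.coe_mk, AddHom.coe_mk]
  simp only [← hc, hskew ⁅X, a Z⁆ Y, hskew ⁅Y, a Z⁆ X, hskew Y X, hskew (a Y) X,
    hskew (a ⁅X, Z⁆) Y, hskew (a ⁅Y, Z⁆) X, map_neg]
  ring

theorem c2_iff_closed (hskew : ∀ X Y, ω X Y = - ω Y X)
    (hclosed : ∀ X Y Z, dTwo (fun U V => ω U V) X Y Z = 0)
    (hp1 : ∀ X : VecF A, p (ω X) = X) (hp2 : ∀ ξ : OneForm A, ω (p ξ) = ξ)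
    (hc : ∀ X Y, ω (a X) Y = ω X (a Y)) :
    (∀ (ξ η : OneForm A) (Z : VecF A),
        lieOneForm (p ξ) η (a Z) - lieOneForm (p η) ξ (a Z) - dFun (η (p ξ)) (a Z)
          = lieOneForm (p ξ) (η ∘ₗ a) Z - lieOneForm (p η) (ξ ∘ₗ a) Z
              - dFun (η (p (ξ ∘ₗ a))) Z)
      ↔ ∀ X Y Z, dTwo (fun U V => ω (a U) V) X Y Z = 0 := by
  constructor
  · intro h X Y Z
    have hdefect := c2_defect_eq_dTwo_sub_dTwo hskew hp1 hc X Y Z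
    rwa [h, sub_self, hclosed, zero_sub, eq_comm, neg_eq_zero] at hdefect
  · intro h ξ η Z
    rw [← hp2 ξ, ← hp2 η, ← sub_eq_zero, c2_defect_eq_dTwo_sub_dTwo hskew hp1 hc, hclosed, h,
      sub_self]

end

/-- Here `p` is `π♯`, `a*ξ = ξ ∘ₗ a`, `π(ξ,η) = η(π♯ξ)` and `[ξ,η]_π(Z) =
L_{π♯ξ}η(Z) − L_{π♯η}ξ(Z) − d(π(ξ,η))(Z)`. -/
theorem C2_iff_commute_and_closed
    (ω : VecF A →ₗ[A] VecF A →ₗ[A] A) (hskew : ∀ X Y, ω X Y = - ω Y X)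
    (hclosed : ∀ X Y Z, dTwo (fun U V => ω U V) X Y Z = 0)
    (p : OneForm A →ₗ[A] VecF A)
    (hp1 : ∀ X : VecF A, p (ω X) = X) (hp2 : ∀ ξ : OneForm A, ω (p ξ) = ξ)
    (a : VecF A →ₗ[A] VecF A) :
    ((∀ ξ : OneForm A, a (p ξ) = p (ξ ∘ₗ a)) ∧
      (∀ (ξ η : OneForm A) (Z : VecF A),
        lieOneForm (p ξ) η (a Z) - lieOneForm (p η) ξ (a Z) - dFun (η (p ξ)) (a Z)
          = lieOneForm (p ξ) (η ∘ₗ a) Z - lieOneForm (p η) (ξ ∘ₗ a) Z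
              - dFun (η (p (ξ ∘ₗ a))) Z))
      ↔ ((∀ X Y, ω (a X) Y = ω X (a Y)) ∧
          ∀ X Y Z, dTwo (fun U V => ω (a U) V) X Y Z = 0) := by
  rw [sharp_comp_eq_iff_compatible hp1 hp2]
  exact and_congr_right fun hc => c2_iff_closed hskew hclosed hp1 hp2 hc
end
end

section
/- Let f : M₁ → M₂ be a smooth map between manifolds equipped with generalized complex data (πᵢ, aᵢ, σᵢ) satisfying conditions (C3): aᵢ² + πᵢ♯σᵢ♯ = −Id and N_{aᵢ}(X,Y) = πᵢ♯ i_{X∧Y}(dσᵢ). Suppose f*σ₂ = σ₁ and df∘a₁ = a₂∘df. If x ∈ M₂ is a regular value of f, then on the fiber C = f⁻¹(x), the restriction of a₁ to TC = ker(df) satisfies a₁² = −Id on TC and N_{a₁}(X,Y) = 0 for X, Y tangent to C; i.e. a₁ restricts to an integrable complex structure on C. -/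
noncomputable section

open Derivation

variable (A : Type*) [CommRing A] [Algebra ℝ A]

variable {A}

/-!
Because `σ` is pulled back along `f`, every vertical field lies in the radical of `σ`. Vertical
fields are closed under the bracket, so both correction terms of (C3), `π♯σ♯X` and
`π♯ i_{X∧Y} dσ`, vanish on them, leaving `a² = −Id` and `N_a = 0` on the fibre; `ker df` is
`a`-invariant because `df ∘ a = a₂ ∘ df`.
-/

def MemRadical (σ : VecF A → VecF A → A) (X : VecF A) : Prop :=
  ∀ Z, σ X Z = 0 ∧ σ Z X = 0

theorem memRadical_comp_of_map_eq_zero {W : Type*} [AddCommGroup W] [Module A W]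
    (F : VecF A →ₗ[A] W) (B : W →ₗ[A] W →ₗ[A] A) {X : VecF A} (hX : F X = 0) :
    MemRadical (fun U V => B (F U) (F V)) X :=
  fun Z => by simp [hX]

theorem dTwo_eq_zero_of_memRadical {σ : VecF A → VecF A → A} {X Y : VecF A}
    (hX : MemRadical σ X) (hY : MemRadical σ Y) (hXY : MemRadical σ ⁅X, Y⁆) (Z : VecF A) :
    dTwo σ X Y Z = 0 := by
  simp [dTwo, (hX Z).1, (hX Y).1, (hX ⁅Y, Z⁆).2, (hY Z).1, (hY ⁅X, Z⁆).2, (hXY Z).1]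

section C3

variable {a : VecF A →ₗ[A] VecF A} {σ : VecF A → VecF A → A}
  {p : (VecF A → A) → VecF A}

theorem apply_apply_eq_neg_of_memRadical (hp0 : p (fun _ => 0) = 0)
    (hC3a : ∀ X, a (a X) + p (fun Y => σ X Y) = -X) {X : VecF A} (hX : MemRadical σ X) :
    a (a X) = -X := by
  have hσX : (fun Y => σ X Y) = fun _ => 0 := funext fun Y => (hX Y).1
  simpa [hσX, hp0] using hC3a X

theorem nijenhuis_eq_zero_of_memRadical (hp0 : p (fun _ => 0) = 0)
    (hC3b : ∀ X Y, nijenhuis a X Y = p (fun Z => dTwo σ X Y Z)) {X Y : VecF A}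
    (hX : MemRadical σ X) (hY : MemRadical σ Y) (hXY : MemRadical σ ⁅X, Y⁆) :
    nijenhuis a X Y = 0 := by
  rw [hC3b, funext (dTwo_eq_zero_of_memRadical hX hY hXY), hp0]

end C3

/-- The differential of `f` is modelled by an `A`-linear map `F : X(M₁) → W`, with `W` modelling
sections of `f*TM₂`; `ker F` being closed under the bracket models the fibre being a submanifold,
and `σ = f*σ₂` is modelled by `σ(X,Y) = B(FX, FY)`. -/
theorem fiber_complex_general
    (a : VecF A →ₗ[A] VecF A)
    (σ : VecF A →ₗ[A] VecF A →ₗ[A] A)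
    (p : (VecF A → A) → VecF A) (hp0 : p (fun _ => (0 : A)) = 0)
    (hC3a : ∀ X : VecF A, a (a X) + p (fun Y => σ X Y) = -X)
    (hC3b : ∀ X Y : VecF A,
      nijenhuis a X Y = p (fun Z => dTwo (fun U V => σ U V) X Y Z))
    (W : Type*) [AddCommGroup W] [Module A W]
    (F : VecF A →ₗ[A] W) (a₂ : W →ₗ[A] W)
    (hrel : ∀ X, F (a X) = a₂ (F X))
    (hbr : ∀ X Y : VecF A, F X = 0 → F Y = 0 → F ⁅X, Y⁆ = 0)
    (B : W →ₗ[A] W →ₗ[A] A) (hpull : ∀ X Y, σ X Y = B (F X) (F Y)) :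
    (∀ X : VecF A, F X = 0 → F (a X) = 0 ∧ a (a X) = -X)
      ∧ ∀ X Y : VecF A, F X = 0 → F Y = 0 → nijenhuis a X Y = 0 := by
  have hσ : (fun U V => σ U V) = fun U V => B (F U) (F V) := funext₂ hpull
  have hnull : ∀ {X}, F X = 0 → MemRadical (fun U V => σ U V) X := fun hX => by
    rw [hσ]; exact memRadical_comp_of_map_eq_zero F B hX
  refine ⟨fun X hX => ⟨by rw [hrel, hX, map_zero], ?_⟩, fun X Y hX hY => ?_⟩
  · exact apply_apply_eq_neg_of_memRadical hp0 hC3a (hnull hX)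
  · exact nijenhuis_eq_zero_of_memRadical hp0 hC3b (hnull hX) (hnull hY)
      (hnull (hbr X Y hX hY))

/-- fibers of a generalized holomorphic map are complex.
The differential of the map `f : M₁ → M₂` is modelled by an `A`-linear map
`F : X(M₁) → W` (with `W` modelling sections of `f*TM₂`), `a₂` models the
`(1,1)`-tensor of the target (`F ∘ a = a₂ ∘ F`), the vertical fields
`ker F` are closed under the bracket, and `σ = f*σ₂` is modelled by
`σ(X,Y) = B(FX, FY)`. Condition (C3) holds for `(π, a, σ)` with `π♯ = p`.
Then `a` restricts to `ker F` with `a² = −Id` and vanishing Nijenhuis torsion. -/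
theorem fiber_complex
    (a : VecF A →ₗ[A] VecF A)
    (σ : VecF A →ₗ[A] VecF A →ₗ[A] A) (hσ : ∀ X Y, σ X Y = - σ Y X)
    (p : (VecF A → A) → VecF A) (hp0 : p (fun _ => (0 : A)) = 0)
    (hC3a : ∀ X : VecF A, a (a X) + p (fun Y => σ X Y) = -X)
    (hC3b : ∀ X Y : VecF A,
      nijenhuis a X Y = p (fun Z => dTwo (fun U V => σ U V) X Y Z))
    (W : Type*) [AddCommGroup W] [Module A W]
    (F : VecF A →ₗ[A] W) (a₂ : W →ₗ[A] W)
    (hrel : ∀ X, F (a X) = a₂ (F X))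
    (hbr : ∀ X Y : VecF A, F X = 0 → F Y = 0 → F ⁅X, Y⁆ = 0)
    (B : W →ₗ[A] W →ₗ[A] A) (hpull : ∀ X Y, σ X Y = B (F X) (F Y)) :
    (∀ X : VecF A, F X = 0 → F (a X) = 0 ∧ a (a X) = -X)
      ∧ ∀ X Y : VecF A, F X = 0 → F Y = 0 → nijenhuis a X Y = 0 :=
  fiber_complex_general a σ p hp0 hC3a hC3b W F a₂ hrel hbr B hpull
end
end
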